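/- arXiv:2405.03407 — 4 statements merged into one kernel-verified Lean document; each statement's English description precedes it below -/
import Mathlib

section
/- For any ε ∈ (0,1), there exists a positive constant δ < 4ε such that f(x) = x - (1-ε)(1-e^{-x})(x+δ) > 0 for all x ∈ (0,∞). -/
/-! Since `1 - exp (-x) < 1` and `1 - exp (-x) ≤ x`, it suffices to take `δ = ε` and bound the
factor `t = 1 - exp (-x)` by `x` when `x + ε ≤ 1`, and by `1` otherwise, where then
`(1 - ε) * (x + ε) ≤ x`. -/

open Real

lemma one_sub_mul_mul_add_lt {ε x t : ℝ} (hε : 0 < ε) (hε1 : ε < 1) (hx : 0 < x)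
    (htx : t ≤ x) (ht1 : t < 1) : (1 - ε) * t * (x + ε) < x := by
  rcases le_or_gt (x + ε) 1 with hsmall | hlarge
  · calc (1 - ε) * t * (x + ε) ≤ (1 - ε) * x * 1 := by gcongr
      _ < x := by nlinarith
  · have hprod_le : (1 - ε) * (x + ε) ≤ x := by nlinarith
    have hprod_pos : 0 < (1 - ε) * (x + ε) := by nlinarith
    calc (1 - ε) * t * (x + ε) = (1 - ε) * (x + ε) * t := by ring
      _ < (1 - ε) * (x + ε) * 1 := by gcongr
      _ ≤ x := by linarith

theorem tu_lemma (ε : ℝ) (hε : 0 < ε) (hε1 : ε < 1) :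
    ∃ δ : ℝ, 0 < δ ∧ δ < 4 * ε ∧
      ∀ x : ℝ, 0 < x → x - (1 - ε) * (1 - Real.exp (-x)) * (x + δ) > 0 := by
  refine ⟨ε, hε, by linarith, fun x hx => ?_⟩
  have hle_self : 1 - exp (-x) ≤ x := by linarith [one_sub_le_exp_neg x]
  have hlt_one : 1 - exp (-x) < 1 := by linarith [exp_pos (-x)]
  linarith [one_sub_mul_mul_add_lt hε hε1 hx hle_self hlt_one]
end

section
/- Let κ = (κ₁,…,κₙ) ∈ Γ_k with κ₁ ≥ κ₂ ≥ ⋯ ≥ κₙ. Then for any 1 ≤ l < k, σ_l(κ) ≥ κ₁κ₂⋯κ_l. -/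
noncomputable def esymm (n k : ℕ) (κ : Fin n → ℝ) : ℝ :=
  ∑ s ∈ Finset.powersetCard k (Finset.univ : Finset (Fin n)), ∏ i ∈ s, κ i

noncomputable def esymm1 (n m : ℕ) (κ : Fin n → ℝ) (i : Fin n) : ℝ :=
  ∑ s ∈ Finset.powersetCard m ((Finset.univ : Finset (Fin n)).erase i), ∏ j ∈ s, κ j

noncomputable def esymm2 (n m : ℕ) (κ : Fin n → ℝ) (i j : Fin n) : ℝ :=
  ∑ s ∈ Finset.powersetCard m (((Finset.univ : Finset (Fin n)).erase i).erase j), ∏ l ∈ s, κ l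

def GardingCone (n k : ℕ) : Set (Fin n → ℝ) :=
  {κ | ∀ m, 1 ≤ m → m ≤ k → 0 < esymm n m κ}


/-!
Expanding along the largest entry, `σ_l(κ) = κ₁ σ_{l-1}(κ₂,…,κₙ) + σ_l(κ₂,…,κₙ)`, so the bound
follows by induction on `l` once we know that the largest entry of a vector in `Γ_1` is positive
and that deleting an entry maps `Γ_{k+1}` into `Γ_k` (which makes the last term positive).
The deletion property is proved by deformation. If `σ_m` of the shortened vector is `≤ 0` for a
minimal `m`, shift every entry by the same `t ≥ 0` (which preserves the cones) until it vanishes;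
the shortened vector then has `σ_{m-1} > 0`, `σ_m = 0` and `σ_{m+1} > 0`, against Newton's
inequality `σ_{m-1} σ_{m+1} ≲ σ_m²`. Newton's inequality is read off the three lowest coefficients
of a derivative of `∏ (X + κᵢ)`, which stays real-rooted by Rolle's theorem.
-/

open Polynomial Finset

theorem Multiset.esymm_cons {R : Type*} [CommSemiring R] (a : R) (s : Multiset R) (m : ℕ) :
    (a ::ₘ s).esymm (m + 1) = a * s.esymm m + s.esymm (m + 1) := by
  simp only [Multiset.esymm, Multiset.powersetCard_cons, Multiset.map_add, Multiset.sum_add,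
    Multiset.map_map, Function.comp_def, Multiset.prod_cons, Multiset.sum_map_mul_left]
  ring

namespace Polynomial

theorem Splits.derivative {p : ℝ[X]} (hp : p.Splits) : p.derivative.Splits := by
  rw [splits_iff_card_roots] at hp ⊢
  have := card_roots_le_derivative p
  have := card_roots' (Polynomial.derivative p)
  have := natDegree_derivative_le p
  omega

theorem Splits.iterate_derivative {p : ℝ[X]} (hp : p.Splits) (k : ℕ) :
    (Polynomial.derivative^[k] p).Splits := by
  induction k with
  | zero => exact hp
  | succ k ih => rw [Function.iterate_succ_apply']; exact ih.derivative

section LowDiscr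

variable {R : Type*} [CommRing R]

/-- `p'(0)² - p(0) p''(0)`; for `p = c ∏ (X - rᵢ)` with `p(0) ≠ 0` it equals `p(0)² ∑ rᵢ⁻²`. -/
def lowDiscr (p : R[X]) : R := p.coeff 1 ^ 2 - 2 * p.coeff 0 * p.coeff 2

theorem lowDiscr_mul (p q : R[X]) :
    lowDiscr (p * q) = p.coeff 0 ^ 2 * lowDiscr q + q.coeff 0 ^ 2 * lowDiscr p := by
  simp only [lowDiscr, coeff_mul, Finset.Nat.sum_antidiagonal_succ, Finset.Nat.antidiagonal_zero,
    sum_singleton]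
  ring

theorem Splits.lowDiscr_nonneg [LinearOrder R] [IsStrictOrderedRing R] {p : R[X]}
    (hp : p.Splits) : 0 ≤ lowDiscr p := by
  induction hp using Submonoid.closure_induction with
  | mem f hf => rcases hf with ⟨a, rfl⟩ | ⟨a, rfl⟩ <;> simp [lowDiscr, coeff_C, coeff_X]
  | one => simp [lowDiscr, coeff_one]
  | mul f g _ _ hf hg => rw [lowDiscr_mul]; positivity

end LowDiscr

end Polynomial

section Esymm

variable {ι R : Type*} [CommSemiring R]

noncomputable def esymmOn (s : Finset ι) (κ : ι → R) (m : ℕ) : R :=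
  ∑ A ∈ s.powersetCard m, ∏ i ∈ A, κ i

theorem esymmOn_eq_esymm (s : Finset ι) (κ : ι → R) (m : ℕ) :
    esymmOn s κ m = (s.val.map κ).esymm m :=
  (Finset.esymm_map_val κ s m).symm

@[simp] theorem esymmOn_zero (s : Finset ι) (κ : ι → R) : esymmOn s κ 0 = 1 := by
  simp [esymmOn]

theorem esymmOn_one (s : Finset ι) (κ : ι → R) : esymmOn s κ 1 = ∑ i ∈ s, κ i := by
  simp [esymmOn, powersetCard_one, sum_map]

theorem esymmOn_eq_zero_of_card_lt {s : Finset ι} (κ : ι → R) {m : ℕ} (h : #s < m) :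
    esymmOn s κ m = 0 := by
  simp [esymmOn, powersetCard_eq_empty.2 h]

theorem esymmOn_insert [DecidableEq ι] {s : Finset ι} {a : ι} (ha : a ∉ s) (κ : ι → R)
    (m : ℕ) : esymmOn (insert a s) κ (m + 1) = κ a * esymmOn s κ m + esymmOn s κ (m + 1) := by
  simp only [esymmOn_eq_esymm, insert_val_of_notMem ha, Multiset.map_cons, Multiset.esymm_cons]

theorem esymmOn_of_mem [DecidableEq ι] {s : Finset ι} {a : ι} (ha : a ∈ s) (κ : ι → R)
    (m : ℕ) :
    esymmOn s κ (m + 1) = κ a * esymmOn (s.erase a) κ m + esymmOn (s.erase a) κ (m + 1) := by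
  rw [← esymmOn_insert (notMem_erase a s), insert_erase ha]

theorem prod_X_add_C_coeff_eq_esymmOn {s : Finset ι} (κ : ι → R) {m : ℕ} (hm : m ≤ #s) :
    (∏ i ∈ s, (X + C (κ i))).coeff (#s - m) = esymmOn s κ m := by
  rw [prod_X_add_C_coeff s κ (Nat.sub_le _ _), Nat.sub_sub_self hm, esymmOn]

theorem esymmOn_add_const (s : Finset ι) (κ : ι → R) (t : R) {m : ℕ} (hm : m ≤ #s) :
    esymmOn s (fun i => κ i + t) m =
      ∑ j ∈ range (m + 1), esymmOn s κ j * t ^ (m - j) * ((#s - j).choose (m - j) : R) := by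
  have hprod : ∏ i ∈ s, (X + C (κ i + t)) =
      ∑ j ∈ range (#s + 1), C (esymmOn s κ j) * (X + C t) ^ (#s - j) := by
    have := congrArg (·.comp (X + C t)) (Multiset.prod_X_add_C_eq_sum_esymm (s.val.map κ))
    simp only [Multiset.map_map, Function.comp_def, multiset_prod_comp, Polynomial.sum_comp,
      mul_comp, pow_comp, add_comp, X_comp, C_comp, Multiset.card_map, ← esymmOn_eq_esymm] at this
    rw [prod_eq_multiset_prod, ← card_val, ← this]
    congr 2
    funext i
    rw [C_add]
    ring
  have := congrArg (·.coeff (#s - m)) hprod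
  simp only [prod_X_add_C_coeff_eq_esymmOn _ hm, finsetSum_coeff, coeff_C_mul,
    coeff_X_add_C_pow] at this
  rw [this, ← sum_subset (range_subset_range.2 (Nat.succ_le_succ hm))]
  · refine sum_congr rfl fun j hj => ?_
    have hjm : j ≤ m := Nat.lt_succ_iff.1 (mem_range.1 hj)
    rw [Nat.choose_symm_of_eq_add (by omega : #s - j = (#s - m) + (m - j)),
      show #s - j - (#s - m) = m - j by omega, mul_assoc]
  · intro j hjs hj
    rw [mem_range] at hjs hj
    rw [Nat.choose_eq_zero_of_lt (by omega), Nat.cast_zero, mul_zero, mul_zero]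

end Esymm

section Real

variable {ι : Type*}

theorem esymmOn_mul_esymmOn_add_two_le (s : Finset ι) (κ : ι → ℝ) {m : ℕ} (hm : m + 2 ≤ #s) :
    ((#s - m : ℕ) : ℝ) * esymmOn s κ m * esymmOn s κ (m + 2) ≤
      ((#s - m - 1 : ℕ) : ℝ) * esymmOn s κ (m + 1) ^ 2 := by
  obtain ⟨D, hD⟩ : ∃ D, #s = m + 2 + D := ⟨#s - (m + 2), by omega⟩
  set q := derivative^[D] (∏ i ∈ s, (X + C (κ i)))
  have hq : ∀ j ≤ 2,
      (j.factorial : ℝ) * q.coeff j = (j + D).factorial * esymmOn s κ (m + 2 - j) := by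
    intro j hj
    have hfac := Nat.factorial_mul_descFactorial (Nat.le_add_left D j)
    rw [Nat.add_sub_cancel] at hfac
    rw [coeff_iterate_derivative, nsmul_eq_mul, ← mul_assoc, ← Nat.cast_mul, hfac,
      ← prod_X_add_C_coeff_eq_esymmOn κ (by omega)]
    congr 3
    omega
  have h0 : q.coeff 0 = D.factorial * esymmOn s κ (m + 2) := by simpa using hq 0 (by norm_num)
  have h1 : q.coeff 1 = (D + 1) * D.factorial * esymmOn s κ (m + 1) := by
    have := hq 1 (by norm_num)
    rw [Nat.factorial_one, add_comm 1 D, Nat.factorial_succ D] at this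
    push_cast at this
    linear_combination this
  have h2 : 2 * q.coeff 2 = (D + 2) * (D + 1) * D.factorial * esymmOn s κ m := by
    have := hq 2 (by norm_num)
    rw [Nat.factorial_two, show 2 + D = D + 1 + 1 by ring, Nat.factorial_succ (D + 1),
      Nat.factorial_succ D] at this
    push_cast at this
    linear_combination this
  have hdisc : 0 ≤ lowDiscr q :=
    ((Splits.prod fun i _ => Splits.X_add_C (κ i)).iterate_derivative D).lowDiscr_nonneg
  have key : 0 ≤ (D + 1) * D.factorial ^ 2 *
      ((D + 1) * esymmOn s κ (m + 1) ^ 2 - (D + 2) * esymmOn s κ m * esymmOn s κ (m + 2)) := by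
    rw [lowDiscr] at hdisc
    linear_combination hdisc - q.coeff 0 * h2 -
      (D + 2) * (D + 1) * D.factorial * esymmOn s κ m * h0 +
      (q.coeff 1 + (D + 1) * D.factorial * esymmOn s κ (m + 1)) * h1
  have hF : (0 : ℝ) < (D + 1) * D.factorial ^ 2 := by positivity
  rw [show #s - m - 1 = D + 1 by omega, show #s - m = D + 2 by omega]
  push_cast
  nlinarith [nonneg_of_mul_nonneg_right key hF]

theorem esymmOn_add_two_nonpos {s : Finset ι} {κ : ι → ℝ} {m : ℕ} (hpos : 0 < esymmOn s κ m)
    (hzero : esymmOn s κ (m + 1) = 0) : esymmOn s κ (m + 2) ≤ 0 := by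
  rcases lt_or_ge #s (m + 2) with hs | hs
  · exact (esymmOn_eq_zero_of_card_lt κ hs).le
  have newton := esymmOn_mul_esymmOn_add_two_le s κ hs
  rw [hzero, zero_pow two_ne_zero, mul_zero, mul_assoc] at newton
  have hgap : (0 : ℝ) < (#s - m : ℕ) := by exact_mod_cast (by omega : 0 < #s - m)
  exact nonpos_of_mul_nonpos_right (nonpos_of_mul_nonpos_right newton hgap) hpos

theorem esymmOn_pos_of_forall_pos {s : Finset ι} {κ : ι → ℝ} (hκ : ∀ i ∈ s, 0 < κ i) {m : ℕ}
    (hm : m ≤ #s) : 0 < esymmOn s κ m :=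
  sum_pos (fun _ hA => prod_pos fun i hi => hκ i ((mem_powersetCard.1 hA).1 hi))
    (powersetCard_nonempty.2 hm)

theorem exists_esymmOn_add_const_eq_zero {s : Finset ι} {κ : ι → ℝ} {m : ℕ} (hm : m ≤ #s)
    (hκ : esymmOn s κ m ≤ 0) : ∃ t, 0 ≤ t ∧ esymmOn s (fun i => κ i + t) m = 0 := by
  set f : ℝ → ℝ := fun t => esymmOn s (fun i => κ i + t) m
  have hf : Continuous f :=
    continuous_finsetSum _ fun _ _ => continuous_finsetProd _ fun _ _ => by fun_prop
  obtain ⟨T, hT0, hT⟩ : ∃ T : ℝ, 0 ≤ T ∧ ∀ i ∈ s, 0 < κ i + T := by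
    refine ⟨∑ i ∈ s, |κ i| + 1, by positivity, fun i hi => ?_⟩
    have := single_le_sum (f := fun i => |κ i|) (fun _ _ => abs_nonneg _) hi
    linarith [neg_abs_le (κ i)]
  obtain ⟨t, ⟨ht0, -⟩, hft⟩ := intermediate_value_Icc hT0 hf.continuousOn
    ⟨by simpa [f] using hκ, (esymmOn_pos_of_forall_pos hT hm).le⟩
  exact ⟨t, ht0, hft⟩

def InGardingCone (k : ℕ) (s : Finset ι) (κ : ι → ℝ) : Prop :=
  ∀ m, 1 ≤ m → m ≤ k → 0 < esymmOn s κ m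

namespace InGardingCone

variable {k : ℕ} {s : Finset ι} {κ : ι → ℝ}

theorem esymmOn_pos (hκ : InGardingCone k s κ) {m : ℕ} (hm : m ≤ k) : 0 < esymmOn s κ m := by
  rcases Nat.eq_zero_or_pos m with rfl | hm0
  · simp
  · exact hκ m hm0 hm

theorem le_card (hκ : InGardingCone k s κ) {m : ℕ} (hm : m ≤ k) : m ≤ #s :=
  not_lt.1 fun h => (hκ.esymmOn_pos hm).ne' (esymmOn_eq_zero_of_card_lt κ h)

theorem add_const (hκ : InGardingCone k s κ) {t : ℝ} (ht : 0 ≤ t) :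
    InGardingCone k s (fun i => κ i + t) := by
  intro m _ hmk
  rw [esymmOn_add_const s κ t (hκ.le_card hmk)]
  refine sum_pos' (fun j hj => ?_) ⟨m, self_mem_range_succ m, by simpa using hκ.esymmOn_pos hmk⟩
  have := (hκ.esymmOn_pos (by have := mem_range.1 hj; omega : j ≤ k)).le
  positivity

theorem erase [DecidableEq ι] (hκ : InGardingCone (k + 1) s κ) {i : ι} (hi : i ∈ s) :
    InGardingCone k (s.erase i) κ := by
  intro m
  induction m using Nat.strong_induction_on with
  | _ m ih =>
  intro hm1 hmk
  obtain ⟨j, rfl⟩ : ∃ j, m = j + 1 := ⟨m - 1, by omega⟩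
  by_contra! hneg
  have hcard : j + 1 ≤ #(s.erase i) := by
    rw [card_erase_of_mem hi]; have := hκ.le_card le_rfl; omega
  obtain ⟨t, ht0, hzero⟩ := exists_esymmOn_add_const_eq_zero hcard hneg
  have hlow : 0 < esymmOn (s.erase i) (fun x => κ x + t) j :=
    (add_const (fun m' h1 h2 => ih m' (by omega) h1 (by omega)) ht0).esymmOn_pos le_rfl
  have hhigh : 0 < esymmOn (s.erase i) (fun x => κ x + t) (j + 2) := by
    have := (hκ.add_const ht0).esymmOn_pos (m := j + 2) (by omega)
    rwa [esymmOn_of_mem hi, hzero, mul_zero, zero_add] at this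
  exact hhigh.not_ge (esymmOn_add_two_nonpos hlow hzero)

theorem pos_of_forall_le (hκ : InGardingCone k s κ) (hk : 1 ≤ k) {a : ι}
    (hmax : ∀ x ∈ s, κ x ≤ κ a) : 0 < κ a := by
  have h1 := hκ 1 le_rfl hk
  rw [esymmOn_one] at h1
  by_contra! h
  exact h1.not_ge (sum_nonpos fun x hx => (hmax x hx).trans h)

theorem prod_le_esymmOn [DecidableEq ι] (hκ : InGardingCone k s κ) {T : Finset ι} (hTs : T ⊆ s)
    (hdom : ∀ x ∈ T, ∀ y ∈ s \ T, κ y ≤ κ x) (hT : #T < k) :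
    ∏ i ∈ T, κ i ≤ esymmOn s κ #T := by
  induction T using Finset.induction_on_max_value κ generalizing s k with
  | empty => simp
  | insert a T haT hmax ih =>
    rw [card_insert_of_notMem haT] at hT ⊢
    obtain ⟨k, rfl⟩ : ∃ k', k = k' + 1 := ⟨k - 1, by omega⟩
    have has : a ∈ s := hTs (mem_insert_self a T)
    have hamax : ∀ x ∈ s, κ x ≤ κ a := by
      intro x hx
      by_cases hxT : x ∈ insert a T
      · rcases mem_insert.1 hxT with rfl | hxT
        · exact le_rfl
        · exact hmax x hxT
      · exact hdom a (mem_insert_self a T) x (mem_sdiff.2 ⟨hx, hxT⟩)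
    have hκ' := hκ.erase has
    have hprod : ∏ i ∈ T, κ i ≤ esymmOn (s.erase a) κ #T := by
      refine ih hκ'
        (fun x hx => mem_erase.2 ⟨ne_of_mem_of_not_mem hx haT, hTs (mem_insert_of_mem hx)⟩)
        (fun x hx y hy => hdom x (mem_insert_of_mem hx) y ?_) (by omega)
      simp only [mem_sdiff, mem_erase, mem_insert, not_or] at hy ⊢
      exact ⟨hy.1.2, hy.1.1, hy.2⟩
    rw [prod_insert haT, esymmOn_of_mem has]
    have := hκ'.esymmOn_pos (m := #T + 1) (by omega)
    have := mul_le_mul_of_nonneg_left hprod (hκ.pos_of_forall_le (by omega) hamax).le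
    linarith

end InGardingCone

end Real

theorem esymm_lower_bound_general (n k : ℕ) (hkn : k ≤ n)
    (κ : Fin n → ℝ) (hκ : κ ∈ GardingCone n k) (hdec : Antitone κ)
    (l : ℕ) (hlk : l < k) :
    esymm n l κ ≥ ∏ i ∈ Finset.univ.filter (fun i : Fin n => (i : ℕ) < l), κ i := by
  set T := Finset.univ.filter (fun i : Fin n => (i : ℕ) < l)
  have hcard : #T = l := by rw [Fin.card_filter_val_lt]; omega
  have hdom : ∀ x ∈ T, ∀ y ∈ univ \ T, κ y ≤ κ x := by
    intro x hx y hy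
    simp only [T, mem_sdiff, mem_filter, mem_univ, true_and, not_lt] at hx hy
    exact hdec (Fin.le_def.2 (by omega))
  have := InGardingCone.prod_le_esymmOn (s := univ) hκ (subset_univ T) hdom (hcard ▸ hlk)
  rwa [hcard] at this

theorem esymm_lower_bound (n k : ℕ) (hk : 1 ≤ k) (hkn : k ≤ n)
    (κ : Fin n → ℝ) (hκ : κ ∈ GardingCone n k) (hdec : Antitone κ)
    (l : ℕ) (hl : 1 ≤ l) (hlk : l < k) :
    esymm n l κ ≥ ∏ i ∈ Finset.univ.filter (fun i : Fin n => (i : ℕ) < l), κ i :=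
  esymm_lower_bound_general n k hkn κ hκ hdec l hlk
end

section
/- Let κ = (κ₁,…,κₙ) ∈ Γ_k with κ₁ ≥ ⋯ ≥ κₙ. Then there is a positive constant c(n,k) depending only on n and k such that σ_{k-1}(κ|k) ≥ c(n,k)·σ_{k-1}(κ), where σ_{k-1}(κ|k) denotes the (k-1)-th elementary symmetric polynomial of the (n-1)-tuple obtained from κ by deleting the k-th entry. -/
/-!
Write `κ = t :: (A + B)` with `t = κₖ`, `A` the `k - 1` larger and `B` the `n - k` smaller
entries, and induct on `|B|`.  If `B ≥ 0`, either `t < 0`, and deleting `t` only increases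
`σₖ₋₁`, or `κ ≥ 0` and a termwise comparison gives `σₖ₋₁(κ) ≤ k σₖ₋₁(κ|k)`.  Otherwise delete a
negative `b ∈ B`; the rest stays in `Γₖ`.  With `X, Y = σₖ₋₁, σₖ₋₂` of `κ` without `b, t` and
`P, Q, G = σₖ₋₁, σₖ₋₂, σₖ` of `κ` without `b`, induction gives `X ≥ c P` and the goal is
`X + bY ≥ c' (P + bQ)`.  This is immediate when `YP ≤ XQ`; otherwise `σₖ(κ) = G + bP > 0` gives
`(X + bY) P ≥ XP - GY = X² - σₖ Y`, which Newton's inequality bounds below by a multiple of `X²`.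

Newton's inequality is reduced to `j + 2` numbers, where it follows by induction, by
differentiating `∏ (x - κᵢ)`, which keeps all roots real (Rolle).
-/

open Polynomial

namespace Multiset

section CommSemiring

variable {R : Type*} [CommSemiring R]

theorem esymm_zero (s : Multiset R) : s.esymm 0 = 1 := by
  simp [esymm, powersetCard_zero_left]

theorem esymm_eq_zero_of_card_lt {s : Multiset R} {m : ℕ} (h : card s < m) : s.esymm m = 0 := by
  simp [esymm, powersetCard_eq_empty _ h]

theorem esymm_cons_succ (a : R) (s : Multiset R) (m : ℕ) :
    (a ::ₘ s).esymm (m + 1) = s.esymm (m + 1) + a * s.esymm m := by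
  simp only [esymm, powersetCard_cons, map_add, sum_add, map_map, Function.comp_def, prod_cons,
    sum_map_mul_left]

end CommSemiring

theorem esymm_nonneg {s : Multiset ℝ} (hs : ∀ x ∈ s, 0 ≤ x) (m : ℕ) : 0 ≤ s.esymm m :=
  sum_nonneg fun _ hx => by
    obtain ⟨u, hu, rfl⟩ := mem_map.1 hx
    exact prod_nonneg fun y hy => hs y (mem_of_le (mem_powersetCard.1 hu).1 hy)

theorem esymm_pos_of_cons_of_neg {b : ℝ} {s : Multiset ℝ} {k : ℕ} (hb : b < 0)
    (h : ∀ j ≤ k, 0 < (b ::ₘ s).esymm j) : ∀ j ≤ k, 0 < s.esymm j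
  | 0, _ => by simp [esymm_zero]
  | j + 1, hj => by
    have hbs := mul_neg_of_neg_of_pos hb (esymm_pos_of_cons_of_neg hb h j (by omega))
    have := h (j + 1) hj
    rw [esymm_cons_succ] at this
    linarith

theorem esymm_newton_of_card_eq_add_two (j : ℕ) (s : Multiset ℝ) (hs : card s = j + 2) :
    2 * (j + 2) * (s.esymm (j + 2) * s.esymm j) ≤ (j + 1) * s.esymm (j + 1) ^ 2 := by
  induction j generalizing s with
  | zero =>
    obtain ⟨x, y, rfl⟩ := card_eq_two.1 hs
    simp only [insert_eq_cons, ← cons_zero, esymm_cons_succ, esymm_zero,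
      esymm_eq_zero_of_card_lt (s := (0 : Multiset ℝ)) (m := _ + 1) (by simp)]
    nlinarith [sq_nonneg (x - y)]
  | succ j ih =>
    obtain ⟨a, ha⟩ := card_pos_iff_exists_mem.1 (by omega : 0 < card s)
    obtain ⟨s, rfl⟩ := exists_cons_of_mem ha
    have hs' : card s = j + 2 := by simp at hs; omega
    have ih := ih s hs'
    rw [esymm_cons_succ, esymm_cons_succ, esymm_cons_succ, esymm_eq_zero_of_card_lt (by omega)]
    push_cast
    nlinarith [sq_nonneg ((j + 2 : ℝ) * s.esymm (j + 2) - a * s.esymm (j + 1)),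
      mul_le_mul_of_nonneg_left ih (sq_nonneg a)]

end Multiset

theorem Polynomial.card_roots_iterate_derivative {p : ℝ[X]}
    (hp : Multiset.card p.roots = p.natDegree) (d : ℕ) :
    Multiset.card (derivative^[d] p).roots = p.natDegree - d ∧
      (derivative^[d] p).natDegree = p.natDegree - d := by
  have hle : p.natDegree - d ≤ Multiset.card (derivative^[d] p).roots := by
    induction d with
    | zero => simp [hp]
    | succ d ih =>
      have := card_roots_le_derivative (derivative^[d] p)
      rw [Function.iterate_succ_apply']
      omega
  have := card_roots' (derivative^[d] p)
  have := natDegree_iterate_derivative p d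
  omega

namespace Multiset

theorem leadingCoeff_mul_esymm_roots_iterate_derivative (s : Multiset ℝ) {i r d : ℕ}
    (hs : card s = i + r + d) :
    (derivative^[d] (s.map fun a => X - C a).prod).leadingCoeff *
        (derivative^[d] (s.map fun a => X - C a).prod).roots.esymm i =
      (r + d).factorial / r.factorial * s.esymm i := by
  set p := (s.map fun a => X - C a).prod
  have hp_deg : p.natDegree = card s := natDegree_multiset_prod_X_sub_C_eq_card s
  have hp_roots : p.roots = s := roots_multiset_prod_X_sub_C s
  obtain ⟨hq_card, hq_deg⟩ := card_roots_iterate_derivative (p := p) (by rw [hp_roots, hp_deg]) d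
  have hcoeff := coeff_iterate_derivative (k := d) p r
  rw [coeff_eq_esymm_roots_of_card (hq_card.trans hq_deg.symm) (by omega), hq_deg, hp_deg,
    prod_X_sub_C_coeff s (by omega), show card s - d - r = i by omega,
    show card s - (r + d) = i by omega, nsmul_eq_mul] at hcoeff
  have hfact : (r.factorial : ℝ) * (r + d).descFactorial d = (r + d).factorial := by
    exact_mod_cast (by simpa using Nat.factorial_mul_descFactorial (Nat.le_add_left d r))
  rw [← hfact, mul_div_cancel_left₀ _ (by positivity)]
  refine mul_left_cancel₀ (pow_ne_zero i (neg_ne_zero.2 one_ne_zero)) ?_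
  linear_combination hcoeff

theorem esymm_newton (s : Multiset ℝ) (j d : ℕ) (hs : card s = j + d + 1) :
    (j + 2) * (d + 1) * (s.esymm (j + 2) * s.esymm j) ≤ (j + 1) * d * s.esymm (j + 1) ^ 2 := by
  rcases d with _ | d
  · simp [esymm_eq_zero_of_card_lt (show card s < j + 2 by omega)]
  set q := derivative^[d] (s.map fun a => X - C a).prod
  have hq : card q.roots = j + 2 := by
    rw [(card_roots_iterate_derivative (by rw [roots_multiset_prod_X_sub_C,
      natDegree_multiset_prod_X_sub_C_eq_card]) d).1, natDegree_multiset_prod_X_sub_C_eq_card]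
    omega
  have e₀ := leadingCoeff_mul_esymm_roots_iterate_derivative s (i := j + 2) (r := 0) (d := d)
    (by omega)
  have e₁ := leadingCoeff_mul_esymm_roots_iterate_derivative s (i := j + 1) (r := 1) (d := d)
    (by omega)
  have e₂ := leadingCoeff_mul_esymm_roots_iterate_derivative s (i := j) (r := 2) (d := d)
    (by omega)
  have hf₁ : ((1 + d).factorial : ℝ) = (d + 1) * d.factorial := by
    rw [add_comm]; push_cast [Nat.factorial_succ]; ring
  have hf₂ : ((2 + d).factorial : ℝ) = (d + 2) * (d + 1) * d.factorial := by
    rw [add_comm, show d + 2 = d + 1 + 1 by rfl]; push_cast [Nat.factorial_succ]; ring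
  have hR := mul_le_mul_of_nonneg_left (esymm_newton_of_card_eq_add_two j _ hq)
    (sq_nonneg q.leadingCoeff)
  have key : 2 * (j + 2) * ((q.leadingCoeff * q.roots.esymm (j + 2)) *
      (q.leadingCoeff * q.roots.esymm j)) ≤
        (j + 1) * (q.leadingCoeff * q.roots.esymm (j + 1)) ^ 2 := by
    linear_combination hR
  rw [e₀, e₁, e₂, hf₁, hf₂] at key
  simp only [zero_add, Nat.factorial_zero, Nat.factorial_one, Nat.factorial_two, Nat.cast_one,
    Nat.cast_ofNat, div_one] at key
  have hF : (0 : ℝ) < (d + 1) * d.factorial ^ 2 := by positivity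
  refine le_of_mul_le_mul_left ?_ hF
  push_cast
  linear_combination key

theorem mul_esymm_le_of_forall_le {A B : Multiset ℝ} {t : ℝ} (hA : ∀ x ∈ A, t ≤ x)
    (hAB : ∀ x ∈ A + B, 0 ≤ x) {m : ℕ} (hm : m < card A) :
    t * (A + B).esymm m ≤ (m + 1) * (A + B).esymm (m + 1) := by
  induction A using Multiset.induction_on generalizing m with
  | empty => simp at hm
  | cons x A ih =>
    rw [cons_add] at hAB ⊢
    have hx : 0 ≤ x := hAB x (mem_cons_self x _)
    have hC : ∀ y ∈ A + B, 0 ≤ y := fun y hy => hAB y (mem_cons_of_mem hy)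
    have htx : t ≤ x := hA x (mem_cons_self x A)
    rcases m with _ | m
    · have := esymm_nonneg hC 1
      simp only [esymm_cons_succ, esymm_zero, Nat.cast_zero, zero_add, one_mul, mul_one]
      linarith
    · have ih := ih (fun y hy => hA y (mem_cons_of_mem hy)) hC (m := m) (by simpa using hm)
      have h₁ := esymm_nonneg hC (m + 1)
      have h₂ := esymm_nonneg hC (m + 2)
      rw [esymm_cons_succ, esymm_cons_succ]
      push_cast
      nlinarith [mul_le_mul_of_nonneg_right htx h₁, mul_le_mul_of_nonneg_left ih hx]

theorem esymm_cons_add_le_of_forall_nonneg {A B : Multiset ℝ} {t : ℝ} {m : ℕ}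
    (hA : card A = m + 1) (hAt : ∀ x ∈ A, t ≤ x) (hB : ∀ y ∈ B, 0 ≤ y)
    (hκ : ∀ j ≤ m + 2, 0 < (t ::ₘ (A + B)).esymm j) :
    (t ::ₘ (A + B)).esymm (m + 1) ≤ (m + 2) * (A + B).esymm (m + 1) := by
  rw [esymm_cons_succ]
  rcases le_or_gt 0 t with ht | ht
  · have hAB : ∀ x ∈ A + B, 0 ≤ x := by
      simp only [mem_add]
      rintro x (hx | hx)
      exacts [ht.trans (hAt x hx), hB x hx]
    have := mul_esymm_le_of_forall_le hAt hAB (m := m) (by omega)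
    linarith
  · have hpos := esymm_pos_of_cons_of_neg ht hκ
    have := mul_neg_of_neg_of_pos ht (hpos m (by omega))
    have := hpos (m + 1) (by omega)
    nlinarith

theorem mul_esymm_cons_cons_le_of_neg {C : Multiset ℝ} {t b c : ℝ} {m N : ℕ}
    (hC : card C = m + N + 1) (hb : b < 0) (hc : 0 ≤ c)
    (hκ : ∀ j ≤ m + 2, 0 < (b ::ₘ t ::ₘ C).esymm j)
    (hT : c * (t ::ₘ C).esymm (m + 1) ≤ C.esymm (m + 1)) :
    min c (c ^ 2 / ((m + 2) * (N + 1))) * (b ::ₘ t ::ₘ C).esymm (m + 1) ≤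
      (b ::ₘ C).esymm (m + 1) := by
  have hTpos := esymm_pos_of_cons_of_neg hb hκ
  have hnewton := esymm_newton C m N hC
  have hP : (t ::ₘ C).esymm (m + 1) = C.esymm (m + 1) + t * C.esymm m := esymm_cons_succ _ _ _
  have hG : (t ::ₘ C).esymm (m + 2) = C.esymm (m + 2) + t * C.esymm (m + 1) :=
    esymm_cons_succ _ _ _
  have hκ₁ := hκ (m + 1) (by omega)
  have hκ₂ := hκ (m + 2) le_rfl
  rw [esymm_cons_succ b] at hκ₁ hκ₂
  rw [esymm_cons_succ b, esymm_cons_succ b]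
  set X := C.esymm (m + 1)
  set Y := C.esymm m
  set W := C.esymm (m + 2)
  set P := (t ::ₘ C).esymm (m + 1)
  set Q := (t ::ₘ C).esymm m
  set G := (t ::ₘ C).esymm (m + 2)
  have hPpos : 0 < P := hTpos (m + 1) (by omega)
  have hQpos : 0 < Q := hTpos m (by omega)
  have hX : c * P ≤ X := hT
  rcases le_or_gt (Y * P) (X * Q) with hYP | hYP
  · have h : c * (P + b * Q) * P ≤ (X + b * Y) * P := by
      nlinarith [mul_le_mul_of_nonneg_right hX hκ₁.le, mul_le_mul_of_nonpos_left hYP hb.le]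
    calc min c (c ^ 2 / ((m + 2) * (N + 1))) * (P + b * Q) ≤ c * (P + b * Q) :=
          mul_le_mul_of_nonneg_right (min_le_left _ _) hκ₁.le
      _ ≤ X + b * Y := le_of_mul_le_mul_right h hPpos
  · have hY : 0 < Y := by
      have : 0 ≤ X * Q := mul_nonneg ((mul_nonneg hc hPpos.le).trans hX) hQpos.le
      exact pos_of_mul_pos_left (this.trans_lt hYP) hPpos.le
    have hD : (0 : ℝ) < (m + 2) * (N + 1) := by positivity
    have hWY : X ^ 2 - W * Y ≤ (X + b * Y) * P := by
      have : (X + b * Y) * P - (X ^ 2 - W * Y) = Y * (G + b * P) := by rw [hG, hP]; ring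
      nlinarith [mul_pos hY hκ₂]
    have hX2 : X ^ 2 ≤ (m + 2) * (N + 1) * (X ^ 2 - W * Y) := by
      nlinarith [sq_nonneg X]
    have hcP : (c * P) ^ 2 ≤ X ^ 2 := pow_le_pow_left₀ (mul_nonneg hc hPpos.le) hX 2
    have h : c ^ 2 * P * P ≤ (X + b * Y) * ((m + 2) * (N + 1)) * P := by nlinarith
    calc min c (c ^ 2 / ((m + 2) * (N + 1))) * (P + b * Q)
        ≤ c ^ 2 / ((m + 2) * (N + 1)) * (P + b * Q) :=
          mul_le_mul_of_nonneg_right (min_le_right _ _) hκ₁.le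
      _ ≤ c ^ 2 / ((m + 2) * (N + 1)) * P := by
          gcongr
          nlinarith
      _ ≤ X + b * Y := by
          rw [div_mul_eq_mul_div, div_le_iff₀ hD]
          exact le_of_mul_le_mul_right h hPpos

theorem exists_pos_mul_esymm_cons_add_le_succ (m N : ℕ) :
    ∃ c > 0, ∀ (A B : Multiset ℝ) (t : ℝ), card A = m + 1 → card B = N →
      (∀ x ∈ A, t ≤ x) → (∀ y ∈ B, y ≤ t) → (∀ j ≤ m + 2, 0 < (t ::ₘ (A + B)).esymm j) →
        c * (t ::ₘ (A + B)).esymm (m + 1) ≤ (A + B).esymm (m + 1) := by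
  induction N with
  | zero =>
    refine ⟨1 / (m + 2), by positivity, fun A B t hA hB hAt _ hκ => ?_⟩
    have := esymm_cons_add_le_of_forall_nonneg hA hAt (by simp_all) hκ
    rw [div_mul_eq_mul_div, div_le_iff₀ (by positivity)]
    linarith
  | succ N ih =>
    obtain ⟨c, hc, H⟩ := ih
    refine ⟨min (1 / (m + 2)) (min c (c ^ 2 / ((m + 2) * (N + 1)))), by positivity, ?_⟩
    intro A B t hA hB hAt hBt hκ
    by_cases hneg : ∃ b ∈ B, b < 0
    · obtain ⟨b, hbB, hb⟩ := hneg
      rw [← cons_erase hbB, add_cons, cons_swap] at hκ ⊢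
      have hT := H A (B.erase b) t hA (by simp [card_erase_of_mem hbB, hB])
        hAt (fun y hy => hBt y (mem_of_mem_erase hy)) (esymm_pos_of_cons_of_neg hb hκ)
      calc _ ≤ min c (c ^ 2 / ((m + 2) * (N + 1))) *
              (b ::ₘ t ::ₘ (A + B.erase b)).esymm (m + 1) :=
            mul_le_mul_of_nonneg_right (min_le_right _ _) (hκ _ (by omega)).le
        _ ≤ _ := mul_esymm_cons_cons_le_of_neg (by simp [card_erase_of_mem hbB, hA, hB]; omega)
            hb hc.le hκ hT
    · push Not at hneg
      have := esymm_cons_add_le_of_forall_nonneg hA hAt hneg hκ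
      have hpos := hκ (m + 1) (by omega)
      calc _ ≤ 1 / (m + 2) * (t ::ₘ (A + B)).esymm (m + 1) :=
            mul_le_mul_of_nonneg_right (min_le_left _ _) hpos.le
        _ ≤ _ := by
            rw [div_mul_eq_mul_div, div_le_iff₀ (by positivity)]
            linarith

theorem exists_pos_mul_esymm_cons_add_le (m N : ℕ) :
    ∃ c > 0, ∀ (A B : Multiset ℝ) (t : ℝ), card A = m → card B = N →
      (∀ x ∈ A, t ≤ x) → (∀ y ∈ B, y ≤ t) → (∀ j ≤ m + 1, 0 < (t ::ₘ (A + B)).esymm j) →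
        c * (t ::ₘ (A + B)).esymm m ≤ (A + B).esymm m := by
  rcases m with _ | m
  · exact ⟨1, one_pos, by simp [esymm_zero]⟩
  · exact exists_pos_mul_esymm_cons_add_le_succ m N

end Multiset

theorem Finset.univ_erase_val_map {α β : Type*} [Fintype α] [LinearOrder α]
    [LocallyFiniteOrderBot α] [LocallyFiniteOrderTop α]
    (f : α → β) (i : α) :
    ((univ : Finset α).erase i).val.map f = (Iio i).val.map f + (Ioi i).val.map f := by
  have h : (univ : Finset α).erase i = (Iio i).disjUnion (Ioi i)
      (disjoint_left.2 fun j h₁ h₂ => lt_asymm (mem_Iio.1 h₁) (mem_Ioi.1 h₂)) := by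
    ext j
    simp [lt_or_lt_iff_ne]
  rw [h, disjUnion_val, Multiset.map_add]

theorem Finset.univ_val_map {α β : Type*} [Fintype α] [LinearOrder α]
    [LocallyFiniteOrderBot α] [LocallyFiniteOrderTop α]
    (f : α → β) (i : α) :
    (univ : Finset α).val.map f = f i ::ₘ ((Iio i).val.map f + (Ioi i).val.map f) := by
  rw [← univ_erase_val_map, erase_val, ← Multiset.map_cons, Multiset.cons_erase (mem_univ_val i)]

theorem esymm_remove_k_lower_bound (n k : ℕ) (hk : 1 ≤ k) (hkn : k ≤ n) :
    ∃ c : ℝ, 0 < c ∧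
      ∀ κ : Fin n → ℝ, κ ∈ GardingCone n k → Antitone κ →
        esymm1 n (k - 1) κ ⟨k - 1, by omega⟩ ≥ c * esymm n (k - 1) κ := by
  obtain ⟨c, hc, H⟩ := Multiset.exists_pos_mul_esymm_cons_add_le (k - 1) (n - k)
  refine ⟨c, hc, fun κ hκ hanti => ?_⟩
  set i : Fin n := ⟨k - 1, by omega⟩
  rw [esymm1, esymm, ← Finset.esymm_map_val, ← Finset.esymm_map_val, Finset.univ_erase_val_map,
    Finset.univ_val_map κ i]
  refine H _ _ _ (by simp [i]) (by simp [i]; omega) ?_ ?_ ?_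
  · simp only [Multiset.mem_map, Finset.mem_val, Finset.mem_Iio]
    rintro _ ⟨j, hj, rfl⟩
    exact hanti hj.le
  · simp only [Multiset.mem_map, Finset.mem_val, Finset.mem_Ioi]
    rintro _ ⟨j, hj, rfl⟩
    exact hanti hj.le
  · rintro (_ | j) hj
    · simp [Multiset.esymm_zero]
    · have := hκ (j + 1) (by omega) (by omega)
      rwa [esymm, ← Finset.esymm_map_val, Finset.univ_val_map κ i] at this
end

section
/- Let κ = (κ₁,…,κₙ) ∈ Γ_k. Then Σ_{i=1}^n σ_{k-1}(κ|i)·κ_i² ≥ (k/n)·σ₁(κ)·σ_k(κ). -/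
open Finset Polynomial

-- bridge: multiset to Fin function
lemma exists_fin_rep (t : Multiset ℝ) :
    ∃ (M : ℕ) (g : Fin M → ℝ), M = Multiset.card t ∧ Multiset.map g Finset.univ.val = t := by
  obtain ⟨l, rfl⟩ : ∃ l : List ℝ, t = ↑l := ⟨t.toList, (Multiset.coe_toList t).symm⟩
  refine ⟨l.length, l.get, by simp, ?_⟩
  rw [Fin.univ_def]
  show ((List.finRange l.length).map l.get : Multiset ℝ) = _
  rw [List.map_get_finRange]

lemma esymm_eq_multiset (n m : ℕ) (κ : Fin n → ℝ) :
    esymm n m κ = (Multiset.map κ (Finset.univ : Finset (Fin n)).val).esymm m := by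
  rw [Finset.esymm_map_val]; rfl

lemma esymm_zero' (n : ℕ) (κ : Fin n → ℝ) : esymm n 0 κ = 1 := by
  simp [esymm]

lemma esymm_overflow (n m : ℕ) (h : n < m) (κ : Fin n → ℝ) : esymm n m κ = 0 := by
  rw [esymm, Finset.powersetCard_eq_empty.2 (by simpa using h), Finset.sum_empty]

lemma sum_powersetCard_compl {ι : Type*} [DecidableEq ι] (u : Finset ι) (m : ℕ) (hm : m ≤ u.card) (g : ι → ℝ) :
    ∑ s ∈ u.powersetCard m, ∏ i ∈ u \ s, g i
      = ∑ s ∈ u.powersetCard (u.card - m), ∏ i ∈ s, g i := by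
  refine Finset.sum_nbij' (fun s => u \ s) (fun s => u \ s) ?_ ?_ ?_ ?_ ?_
  · intro s hs
    rw [Finset.mem_powersetCard] at hs ⊢
    exact ⟨Finset.sdiff_subset, by rw [Finset.card_sdiff_of_subset hs.1, hs.2]⟩
  · intro s hs
    rw [Finset.mem_powersetCard] at hs ⊢
    refine ⟨Finset.sdiff_subset, ?_⟩
    rw [Finset.card_sdiff_of_subset hs.1, hs.2]
    omega
  · intro s hs
    rw [Finset.mem_powersetCard] at hs
    exact Finset.sdiff_sdiff_eq_self hs.1
  · intro s hs
    rw [Finset.mem_powersetCard] at hs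
    exact Finset.sdiff_sdiff_eq_self hs.1
  · intro s hs; rfl

lemma sq_sum_eq {ι : Type*} [DecidableEq ι] (u : Finset ι) (g : ι → ℝ) :
    (∑ i ∈ u, g i) ^ 2
      = ∑ i ∈ u, g i ^ 2 + 2 * ∑ s ∈ u.powersetCard 2, ∏ i ∈ s, g i := by
  classical
  induction u using Finset.induction_on with
  | empty =>
    rw [Finset.powersetCard_eq_empty.2 (by simp)]
    simp
  | @insert a u ha ih =>
    have himg : ∀ s ∈ u.powersetCard 1, ∀ t ∈ u.powersetCard 1,
        insert a s = insert a t → s = t := by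
      intro s hs t ht h
      rw [Finset.mem_powersetCard] at hs ht
      have h1 : a ∉ s := fun hc => ha (hs.1 hc)
      have h2 : a ∉ t := fun hc => ha (ht.1 hc)
      rw [← Finset.erase_insert h1, h, Finset.erase_insert h2]
    have hdisj : Disjoint (u.powersetCard 2) ((u.powersetCard 1).image (insert a)) := by
      rw [Finset.disjoint_left]
      intro s hs hs'
      rw [Finset.mem_powersetCard] at hs
      obtain ⟨t, _, rfl⟩ := Finset.mem_image.1 hs'
      exact ha (hs.1 (Finset.mem_insert_self a t))
    rw [Finset.sum_insert ha, Finset.sum_insert ha,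
      Finset.powersetCard_succ_insert ha, Finset.sum_union hdisj, Finset.sum_image himg]
    have hins : ∀ s ∈ u.powersetCard 1, ∏ i ∈ insert a s, g i = g a * ∏ i ∈ s, g i := by
      intro s hs
      rw [Finset.mem_powersetCard] at hs
      exact Finset.prod_insert (fun hc => ha (hs.1 hc))
    rw [Finset.sum_congr rfl hins, ← Finset.mul_sum]
    have h1 : ∑ s ∈ u.powersetCard 1, ∏ i ∈ s, g i = ∑ i ∈ u, g i := by
      rw [Finset.powersetCard_one, Finset.sum_map]
      simp
    rw [h1]
    nlinarith [ih]

section top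
variable {n : ℕ} (κ : Fin n → ℝ)

noncomputable def tt (κ : Fin n → ℝ) (i : Fin n) : ℝ := ∏ j ∈ Finset.univ.erase i, κ j

lemma esymm_pred (hn : 1 ≤ n) : esymm n (n-1) κ = ∑ i, tt κ i := by
  have h := sum_powersetCard_compl (Finset.univ : Finset (Fin n)) 1 (by simpa using hn) κ
  rw [Finset.card_univ, Fintype.card_fin] at h
  rw [esymm, ← h, Finset.powersetCard_one, Finset.sum_map]
  refine Finset.sum_congr rfl fun i _ => ?_
  rw [tt]
  congr 1
  simp [Finset.sdiff_singleton_eq_erase]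

lemma esymm_top : esymm n n κ = ∏ i, κ i := by
  have h := Finset.powersetCard_self (Finset.univ : Finset (Fin n))
  rw [Finset.card_fin] at h
  rw [esymm, h, Finset.sum_singleton]

lemma tt_mul_tt {i j : Fin n} (hij : i ≠ j) :
    tt κ i * tt κ j = (∏ l, κ l) * ∏ l ∈ Finset.univ \ {i, j}, κ l := by
  have hA : (Finset.univ.erase i).erase j = Finset.univ \ {i, j} := by
    ext a; simp [Finset.mem_erase, and_comm]
  have h1 : tt κ i = κ j * ∏ l ∈ (Finset.univ.erase i).erase j, κ l := by
    rw [tt, Finset.mul_prod_erase _ _ (Finset.mem_erase.2 ⟨hij.symm, Finset.mem_univ j⟩)]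
  have h2 : tt κ j = κ i * ∏ l ∈ (Finset.univ.erase j).erase i, κ l := by
    rw [tt, Finset.mul_prod_erase _ _ (Finset.mem_erase.2 ⟨hij, Finset.mem_univ i⟩)]
  have h3 : (Finset.univ.erase j).erase i = (Finset.univ.erase i).erase j := by
    ext a; simp [Finset.mem_erase]; tauto
  have h4 : (∏ l, κ l) = κ i * ∏ l ∈ Finset.univ.erase i, κ l :=
    (Finset.mul_prod_erase _ _ (Finset.mem_univ i)).symm
  have h5 : ∏ l ∈ Finset.univ.erase i, κ l
      = κ j * ∏ l ∈ (Finset.univ.erase i).erase j, κ l :=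
    (Finset.mul_prod_erase _ _ (Finset.mem_erase.2 ⟨hij.symm, Finset.mem_univ j⟩)).symm
  rw [h5] at h4
  rw [h1, h2, h3, h4, hA]
  ring

lemma esymm_n2_mul (hn : 2 ≤ n) :
    esymm n (n-2) κ * esymm n n κ = ∑ s ∈ Finset.powersetCard 2 (Finset.univ : Finset (Fin n)), ∏ i ∈ s, tt κ i := by
  have h := sum_powersetCard_compl (Finset.univ : Finset (Fin n)) 2 (by simpa using hn) κ
  rw [Finset.card_univ, Fintype.card_fin] at h
  rw [esymm, ← h, Finset.sum_mul, esymm_top]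
  refine Finset.sum_congr rfl fun s hs => ?_
  rw [Finset.mem_powersetCard] at hs
  obtain ⟨i, j, hij, rfl⟩ := Finset.card_eq_two.1 hs.2
  rw [Finset.prod_pair hij, tt_mul_tt κ hij]
  ring

lemma newton_top (hn : 2 ≤ n) :
    ((n:ℝ) - 1) * esymm n (n-1) κ ^ 2 ≥ 2 * n * (esymm n (n-2) κ * esymm n n κ) := by
  have h1 := esymm_pred κ (by omega)
  have h2 := esymm_n2_mul κ hn
  have h3 := sq_sum_eq (Finset.univ : Finset (Fin n)) (tt κ)
  have hcs : (∑ i, tt κ i) ^ 2 ≤ (n:ℝ) * ∑ i, tt κ i ^ 2 := by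
    have := sq_sum_le_card_mul_sum_sq (s := (Finset.univ : Finset (Fin n))) (f := tt κ)
    simpa using this
  have hn' : (2:ℝ) ≤ (n:ℝ) := by exact_mod_cast hn
  rw [h1, h2]
  nlinarith [h3, hcs]
end top

-- derivative step: from a multiset of card N ≥ 1 produce roots of derivative
lemma deriv_esymm_rel (s : Multiset ℝ) (N : ℕ) (hN : 3 ≤ N) (hcard : Multiset.card s = N) :
    ∃ t : Multiset ℝ, Multiset.card t = N - 1 ∧
      ∀ i ≤ N - 1, ((N : ℝ) - i) * s.esymm i = N * t.esymm i := by
  set P : Polynomial ℝ := (s.map fun a => X - C a).prod with hP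
  have hProots : P.roots = s := roots_multiset_prod_X_sub_C s
  have hPdeg : P.natDegree = N := by
    rw [hP, natDegree_multiset_prod_X_sub_C_eq_card, hcard]
  have hPmonic : P.Monic := monic_multiset_prod_of_monic _ _ fun a _ => monic_X_sub_C a
  have h1 : N ≤ Multiset.card (derivative P).roots + 1 := by
    rw [← hcard, ← hProots]; exact P.card_roots_le_derivative
  have h2 : Multiset.card (derivative P).roots ≤ (derivative P).natDegree :=
    (derivative P).card_roots'
  have h3 : (derivative P).natDegree ≤ N - 1 := by
    rw [← hPdeg]; exact natDegree_derivative_le P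
  have hdeg' : (derivative P).natDegree = N - 1 := by omega
  have hcard' : Multiset.card (derivative P).roots = (derivative P).natDegree := by omega
  have hlc : (derivative P).leadingCoeff = N := by
    rw [leadingCoeff, hdeg']
    have hc := coeff_derivative P (N - 1)
    have hn1 : N - 1 + 1 = N := by omega
    rw [hn1] at hc
    have hc1 : P.coeff N = 1 := by
      rw [← hPdeg]; exact hPmonic.coeff_natDegree
    have e : ((N - 1 : ℕ) : ℝ) + 1 = N := by
      have h1N : 1 ≤ N := by omega
      push_cast [h1N]; ring
    rw [hc, hc1, one_mul, e]
  refine ⟨(derivative P).roots, by omega, ?_⟩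
  intro i hi
  have hvietaP : P.coeff (N - i) = (-1) ^ i * s.esymm i := by
    have h := Multiset.prod_X_sub_C_coeff s (k := N - i) (by omega)
    rw [hcard] at h
    have : N - (N - i) = i := by omega
    rw [this] at h
    exact h
  have hvietaP' : (derivative P).coeff (N - 1 - i)
      = (N : ℝ) * ((-1) ^ i * (derivative P).roots.esymm i) := by
    have h := Polynomial.coeff_eq_esymm_roots_of_card hcard' (k := N - 1 - i) (by omega)
    rw [hdeg'] at h
    have : N - 1 - (N - 1 - i) = i := by omega
    rw [this, hlc] at h
    rw [h]; ring
  have hder : (derivative P).coeff (N - 1 - i) = P.coeff (N - i) * (N - i : ℕ) := by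
    have h := coeff_derivative P (N - 1 - i)
    have : N - 1 - i + 1 = N - i := by omega
    rw [this] at h
    rw [h]
    congr 1
    exact_mod_cast this
  rw [hder, hvietaP] at hvietaP'
  have hsign : ((-1 : ℝ) ^ i) ≠ 0 := by
    apply pow_ne_zero; norm_num
  have hNi : ((N - i : ℕ) : ℝ) = (N : ℝ) - i := by
    have hiN : i ≤ N := by omega
    push_cast [hiN]; ring
  rw [hNi] at hvietaP'
  have h2' : (-1:ℝ)^i * (((N:ℝ) - i) * s.esymm i)
      = (-1:ℝ)^i * ((N:ℝ) * (derivative P).roots.esymm i) := by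
    linear_combination hvietaP'
  exact mul_left_cancel₀ hsign h2'

lemma newton_fin : ∀ (N : ℕ) (f : Fin N → ℝ) (m : ℕ), 1 ≤ m → m + 1 ≤ N →
    ((m:ℝ) * ((N:ℝ) - m)) * esymm N m f ^ 2
      ≥ ((m:ℝ) + 1) * ((N:ℝ) - m + 1) * (esymm N (m-1) f * esymm N (m+1) f) := by
  intro N
  induction N using Nat.strong_induction_on with
  | _ N IH =>
  intro f m hm hmN
  rcases eq_or_lt_of_le hmN with heq | hlt
  · -- top case N = m + 1
    subst heq
    have htop := newton_top f (by omega)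
    have h1 : m + 1 - 1 = m := by omega
    have h2 : m + 1 - 2 = m - 1 := by omega
    rw [h1, h2] at htop
    push_cast at htop ⊢
    nlinarith [htop]
  · -- derivative step
    have hN3 : 3 ≤ N := by omega
    set s : Multiset ℝ := Multiset.map f (Finset.univ : Finset (Fin N)).val with hs
    have hcards : Multiset.card s = N := by simp [hs]
    obtain ⟨t, htc, hrel⟩ := deriv_esymm_rel s N hN3 hcards
    obtain ⟨M, g, hM, hg⟩ := exists_fin_rep t
    have hMN : M = N - 1 := by omega
    have hesy : ∀ j, esymm M j g = t.esymm j := by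
      intro j; rw [esymm_eq_multiset, hg]
    have hfs : ∀ j, esymm N j f = s.esymm j := by
      intro j; rw [esymm_eq_multiset]
    have hIH := IH M (by omega) g m hm (by omega)
    rw [hesy, hesy, hesy] at hIH
    have hNpos : (0:ℝ) < N := by positivity
    have hMcast : (M:ℝ) = (N:ℝ) - 1 := by
      have : (1:ℕ) ≤ N := by omega
      rw [hMN]; push_cast [this]; ring
    rw [hMcast] at hIH
    -- the three relations
    have hrm : ((N:ℝ) - m) * s.esymm m = N * t.esymm m := by
      have := hrel m (by omega); exact_mod_cast this
    have hrm1 : ((N:ℝ) - (m - 1 : ℕ)) * s.esymm (m-1) = N * t.esymm (m-1) :=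
      hrel (m-1) (by omega)
    have hrm1' : ((N:ℝ) - m + 1) * s.esymm (m-1) = N * t.esymm (m-1) := by
      have hc : ((m - 1 : ℕ) : ℝ) = (m:ℝ) - 1 := by push_cast [hm]; ring
      rw [hc] at hrm1; linarith [hrm1]
    have hrp1 : ((N:ℝ) - (m + 1 : ℕ)) * s.esymm (m+1) = N * t.esymm (m+1) :=
      hrel (m+1) (by omega)
    have hrp1' : ((N:ℝ) - m - 1) * s.esymm (m+1) = N * t.esymm (m+1) := by
      push_cast at hrp1; linarith [hrp1]
    rw [hfs, hfs, hfs]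
    -- key: multiply hIH by N^2 and substitute
    have hIH2 : (m:ℝ) * (((N:ℝ)-1) - m) * (((N:ℝ) - m) * s.esymm m)^2
        ≥ ((m:ℝ)+1) * (((N:ℝ)-1) - m + 1) *
          (( ((N:ℝ) - m + 1) * s.esymm (m-1)) * (((N:ℝ) - m - 1) * s.esymm (m+1))) := by
      rw [hrm, hrm1', hrp1']
      nlinarith [hIH, sq_nonneg (N:ℝ), mul_nonneg (sq_nonneg (N:ℝ)) (sub_nonneg.2 hIH)]
    have key : ((N:ℝ) - m) * ((N:ℝ) - m - 1) *
        ((m:ℝ) * ((N:ℝ) - m) * s.esymm m ^ 2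
          - ((m:ℝ) + 1) * ((N:ℝ) - m + 1) * (s.esymm (m-1) * s.esymm (m+1))) ≥ 0 := by
      nlinarith [hIH2]
    have hp1 : (0:ℝ) < (N:ℝ) - m := by
      have : (m:ℝ) + 1 < N := by exact_mod_cast hlt
      linarith
    have hp2 : (0:ℝ) < (N:ℝ) - m - 1 := by
      have : (m:ℝ) + 1 < N := by exact_mod_cast hlt
      linarith
    nlinarith [key, mul_pos hp1 hp2]

-- split identity: σ_{m+1} = κ_i σ_m(κ|i) + σ_{m+1}(κ|i)
lemma esymm_split (n m : ℕ) (κ : Fin n → ℝ) (i : Fin n) :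
    esymm n (m+1) κ = κ i * esymm1 n m κ i + esymm1 n (m+1) κ i := by
  have hins : (Finset.univ : Finset (Fin n)) = insert i (Finset.univ.erase i) :=
    (Finset.insert_erase (Finset.mem_univ i)).symm
  have hnotmem : i ∉ (Finset.univ : Finset (Fin n)).erase i := Finset.notMem_erase i _
  have himg : ∀ s ∈ (Finset.univ.erase i).powersetCard m,
      ∀ t ∈ (Finset.univ.erase i).powersetCard m, insert i s = insert i t → s = t := by
    intro s hs t ht h
    rw [Finset.mem_powersetCard] at hs ht
    have h1 : i ∉ s := fun hc => hnotmem (hs.1 hc)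
    have h2 : i ∉ t := fun hc => hnotmem (ht.1 hc)
    rw [← Finset.erase_insert h1, h, Finset.erase_insert h2]
  have hdisj : Disjoint ((Finset.univ.erase i).powersetCard (m+1))
      (((Finset.univ.erase i).powersetCard m).image (insert i)) := by
    rw [Finset.disjoint_left]
    intro s hs hs'
    rw [Finset.mem_powersetCard] at hs
    obtain ⟨t, _, rfl⟩ := Finset.mem_image.1 hs'
    exact hnotmem (hs.1 (Finset.mem_insert_self i t))
  rw [esymm]
  conv_lhs => rw [hins]
  rw [Finset.powersetCard_succ_insert hnotmem, Finset.sum_union hdisj,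
    Finset.sum_image himg]
  have hins2 : ∀ s ∈ (Finset.univ.erase i).powersetCard m,
      ∏ j ∈ insert i s, κ j = κ i * ∏ j ∈ s, κ j := by
    intro s hs
    rw [Finset.mem_powersetCard] at hs
    exact Finset.prod_insert (fun hc => hnotmem (hs.1 hc))
  rw [Finset.sum_congr rfl hins2, ← Finset.mul_sum, esymm1, esymm1]
  ring

-- double counting: Σ_i κ_i σ_m(κ|i) = (m+1) σ_{m+1}
lemma sum_esymm1_mul (n m : ℕ) (κ : Fin n → ℝ) :
    ∑ i, κ i * esymm1 n m κ i = (m + 1 : ℝ) * esymm n (m+1) κ := by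
  have rhs_eq : (m + 1 : ℝ) * esymm n (m+1) κ
      = ∑ t ∈ (Finset.univ : Finset (Fin n)).powersetCard (m+1), ∑ i ∈ t, κ i * ∏ j ∈ t.erase i, κ j := by
    rw [esymm, Finset.mul_sum]
    refine Finset.sum_congr rfl fun t ht => ?_
    rw [Finset.mem_powersetCard] at ht
    have : ∀ i ∈ t, κ i * ∏ j ∈ t.erase i, κ j = ∏ j ∈ t, κ j := by
      intro i hi; exact Finset.mul_prod_erase t κ hi
    rw [Finset.sum_congr rfl this, Finset.sum_const, ht.2, nsmul_eq_mul]
    push_cast; ring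
  rw [rhs_eq]
  simp_rw [esymm1, Finset.mul_sum]
  rw [Finset.sum_sigma', Finset.sum_sigma']
  refine Finset.sum_nbij' (fun p => ⟨insert p.1 p.2, p.1⟩) (fun p => ⟨p.2, p.1.erase p.2⟩)
    ?_ ?_ ?_ ?_ ?_
  · rintro ⟨i, s⟩ hp
    rw [Finset.mem_sigma, Finset.mem_powersetCard] at hp
    have hnotmem : i ∉ s := fun hc => (Finset.notMem_erase i _) (hp.2.1 hc)
    rw [Finset.mem_sigma, Finset.mem_powersetCard]
    refine ⟨⟨Finset.subset_univ _, ?_⟩, Finset.mem_insert_self i s⟩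
    rw [Finset.card_insert_of_notMem hnotmem, hp.2.2]
  · rintro ⟨t, i⟩ hp
    rw [Finset.mem_sigma, Finset.mem_powersetCard] at hp
    rw [Finset.mem_sigma, Finset.mem_powersetCard]
    refine ⟨Finset.mem_univ i, ?_, ?_⟩
    · intro a ha
      rw [Finset.mem_erase] at ha ⊢
      exact ⟨ha.1, Finset.mem_univ a⟩
    · rw [Finset.card_erase_of_mem hp.2, hp.1.2]
      omega
  · rintro ⟨i, s⟩ hp
    rw [Finset.mem_sigma, Finset.mem_powersetCard] at hp
    have hnotmem : i ∉ s := fun hc => (Finset.notMem_erase i _) (hp.2.1 hc)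
    simp only [Finset.erase_insert hnotmem]
  · rintro ⟨t, i⟩ hp
    rw [Finset.mem_sigma, Finset.mem_powersetCard] at hp
    simp only [Finset.insert_erase hp.2]
  · rintro ⟨i, s⟩ hp
    rw [Finset.mem_sigma, Finset.mem_powersetCard] at hp
    have hnotmem : i ∉ s := fun hc => (Finset.notMem_erase i _) (hp.2.1 hc)
    simp only [Finset.erase_insert hnotmem]

lemma esymm_one' (n : ℕ) (κ : Fin n → ℝ) : esymm n 1 κ = ∑ i, κ i := by
  rw [esymm, Finset.powersetCard_one, Finset.sum_map]
  simp

lemma maclaurin_chain (n k : ℕ) (hk : 1 ≤ k) (hkn : k ≤ n) (κ : Fin n → ℝ)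
    (hpos : ∀ m, 1 ≤ m → m ≤ k → 0 < esymm n m κ) :
    ∀ m, m ≤ k → (n:ℝ) * ((m:ℝ) + 1) * esymm n (m+1) κ
      ≤ ((n:ℝ) - m) * (esymm n 1 κ * esymm n m κ) := by
  intro m
  induction m with
  | zero =>
    intro _
    rw [esymm_zero']
    push_cast
    apply le_of_eq
    ring
  | succ m ih =>
    intro hm1
    have hmk : m ≤ k := by omega
    have hIH := ih hmk
    have he1 : 0 < esymm n 1 κ := hpos 1 (by omega) hk
    have hem1 : 0 < esymm n (m+1) κ := hpos (m+1) (by omega) hm1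
    have hem : 0 < esymm n m κ := by
      rcases Nat.eq_zero_or_pos m with h0 | h0
      · rw [h0, esymm_zero']; norm_num
      · exact hpos m h0 hmk
    have hnm1 : (0:ℝ) ≤ (n:ℝ) - (m+1) := by
      have : m + 1 ≤ n := by omega
      have := (Nat.cast_le (α := ℝ)).2 this
      push_cast at this ⊢
      linarith
    push_cast
    rcases le_or_gt (esymm n (m+2) κ) 0 with hneg | hpos2
    · have hrhs : (0:ℝ) ≤ ((n:ℝ) - ((m:ℝ)+1)) * (esymm n 1 κ * esymm n (m+1) κ) := by
        apply mul_nonneg (by push_cast at hnm1 ⊢; linarith)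
        positivity
      have hlhs : (n:ℝ) * ((m:ℝ) + 1 + 1) * esymm n (m+2) κ ≤ 0 := by
        apply mul_nonpos_of_nonneg_of_nonpos _ hneg
        positivity
      calc (n:ℝ) * ((m:ℝ) + 1 + 1) * esymm n (m+1+1) κ ≤ 0 := hlhs
        _ ≤ _ := hrhs
    · have hm2n : m + 2 ≤ n := by
        by_contra hc
        rw [esymm_overflow n (m+2) (by omega) κ] at hpos2
        exact lt_irrefl 0 hpos2
      have hnewton := newton_fin n κ (m+1) (by omega) (by omega)
      have h1 : m + 1 - 1 = m := by omega
      rw [h1] at hnewton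
      push_cast at hnewton hIH
      have hp1 : (0:ℝ) < (n:ℝ) - m := by
        have : (m:ℝ) + 2 ≤ n := by exact_mod_cast hm2n
        linarith
      -- multiply IH by (n-m-1) * e_{m+1} ≥ 0 and combine with newton
      have step1 : (n:ℝ) * ((m:ℝ)+1) * esymm n (m+1) κ * (((n:ℝ) - m - 1) * esymm n (m+1) κ)
          ≤ ((n:ℝ) - m) * (esymm n 1 κ * esymm n m κ) * (((n:ℝ) - m - 1) * esymm n (m+1) κ) := by
        apply mul_le_mul_of_nonneg_right hIH
        apply mul_nonneg _ (le_of_lt hem1)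
        push_cast at hnm1; linarith
      nlinarith [hnewton, step1, mul_pos hp1 hem, mul_pos he1 hem1, hpos2,
        mul_pos (mul_pos hp1 hem) hpos2]

theorem newton_type_ineq (n k : ℕ) (hk : 1 ≤ k) (hkn : k ≤ n)
    (κ : Fin n → ℝ) (hκ : κ ∈ GardingCone n k) :
    ∑ i, esymm1 n (k - 1) κ i * (κ i) ^ 2 ≥ (k / n : ℝ) * esymm n 1 κ * esymm n k κ := by
  have hpos : ∀ m, 1 ≤ m → m ≤ k → 0 < esymm n m κ := hκ
  have hn1 : 1 ≤ n := le_trans hk hkn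
  have hnpos : (0:ℝ) < n := by positivity
  have hk1 : k - 1 + 1 = k := by omega
  -- identity: LHS = e_1 e_k - (k+1) e_{k+1}
  have hterm : ∀ i, esymm1 n (k-1) κ i * (κ i) ^ 2
      = κ i * esymm n k κ - κ i * esymm1 n k κ i := by
    intro i
    have hsplit := esymm_split n (k-1) κ i
    rw [hk1] at hsplit
    linear_combination (-(κ i)) * hsplit
  have hident : ∑ i, esymm1 n (k-1) κ i * (κ i) ^ 2
      = esymm n 1 κ * esymm n k κ - ((k:ℝ) + 1) * esymm n (k+1) κ := by
    rw [Finset.sum_congr rfl fun i _ => hterm i, Finset.sum_sub_distrib,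
      ← Finset.sum_mul, sum_esymm1_mul n k κ, esymm_one']
  rw [hident]
  have hchain := maclaurin_chain n k hk hkn κ hpos k le_rfl
  have he1 : 0 < esymm n 1 κ := hpos 1 le_rfl hk
  have hek : 0 < esymm n k κ := hpos k hk le_rfl
  rw [ge_iff_le, show (k / n : ℝ) * esymm n 1 κ * esymm n k κ
    = ((k:ℝ) * (esymm n 1 κ * esymm n k κ)) / n from by ring, div_le_iff₀ hnpos]
  have hkn' : (k:ℝ) ≤ n := by exact_mod_cast hkn
  nlinarith [hchain, mul_pos he1 hek]
end
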